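/- arXiv:1503.00650 — 10 statements merged into one kernel-verified Lean document; each statement's English description precedes it below -/
import Mathlib

section
/- Let V be a finite type and R a consistent relation on V. Then: (a) any two simple cycles of R that share a vertex have the same vertex set (the images of the two cycle maps are equal); and (b) the relation R' consisting of those edges of R that do not lie on any simple cycle of R admits no closed walk of positive length. (This is the nontrivial content of the characterization: a consistent instance is the union of a forest oriented from leaves to roots together with disjoint simple cycles.) -/
/-- A relation is consistent (satisfies the key constraint on the first attribute)
if it is functional. -/
def Consistent {V : Type*} (R : V → V → Prop) : Prop :=
  ∀ a b b', R a b → R a b' → b = b'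

/-- A simple cycle of length `k` in `R`: an injective closed walk `ZMod k → V`. -/
def IsSimpleCycle {V : Type*} (R : V → V → Prop) (k : ℕ) (g : ZMod k → V) : Prop :=
  Function.Injective g ∧ ∀ i, R (g i) (g (i + 1))

/-- The edge `(a, b)` lies on some simple cycle of `R` (of length at least 1). -/
def OnSimpleCycle {V : Type*} (R : V → V → Prop) (a b : V) : Prop :=
  ∃ k : ℕ, 1 ≤ k ∧ ∃ c : ZMod k → V, IsSimpleCycle R k c ∧ ∃ j, c j = a ∧ c (j + 1) = b

/-- Shift lemma for two walks on `ZMod`. -/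
lemma cycle_shift {V : Type*} {R : V → V → Prop} (hR : Consistent R)
    {k l : ℕ} {g : ZMod k → V} {h : ZMod l → V}
    (hg : ∀ i, R (g i) (g (i + 1))) (hh : ∀ i, R (h i) (h (i + 1)))
    {i : ZMod k} {j : ZMod l} (hij : g i = h j) :
    ∀ t : ℕ, g (i + t) = h (j + t) := by
  intro t
  induction t with
  | zero => simpa using hij
  | succ t ih =>
    have e1 : i + ((t + 1 : ℕ) : ZMod k) = (i + t) + 1 := by push_cast; ring
    have e2 : j + ((t + 1 : ℕ) : ZMod l) = (j + t) + 1 := by push_cast; ring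
    rw [e1, e2]
    have h1 := hg (i + t)
    have h2 := hh (j + t)
    rw [← ih] at h2
    exact hR _ _ _ h1 h2

lemma range_subset {V : Type*} {R : V → V → Prop} (hR : Consistent R)
    {k l : ℕ} (hk : 1 ≤ k) {g : ZMod k → V} {h : ZMod l → V}
    (hg : ∀ i, R (g i) (g (i + 1))) (hh : ∀ i, R (h i) (h (i + 1)))
    {i : ZMod k} {j : ZMod l} (hij : g i = h j) :
    Set.range g ⊆ Set.range h := by
  haveI : NeZero k := ⟨by omega⟩
  rintro x ⟨i', rfl⟩
  set t : ℕ := (i' - i).val with ht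
  have hi' : i + (t : ZMod k) = i' := by simp [ht, ZMod.natCast_val, ZMod.cast_id']
  rw [← hi', cycle_shift hR hg hh hij t]
  exact ⟨j + t, rfl⟩

/-- Shift lemma for a walk indexed by ℕ. -/
lemma nat_shift {V : Type*} {R : V → V → Prop} (hR : Consistent R)
    {u : ℕ → V} (hu : ∀ m, R (u m) (u (m + 1))) {a b : ℕ} (hab : u a = u b) :
    ∀ t : ℕ, u (a + t) = u (b + t) := by
  intro t
  induction t with
  | zero => simpa using hab
  | succ t ih =>
    have h1 := hu (a + t)
    have h2 := hu (b + t)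
    rw [← ih] at h2
    have := hR _ _ _ h1 h2
    simpa [Nat.add_assoc] using this

theorem stmt0 {V : Type*} [Fintype V] (R : V → V → Prop) (hR : Consistent R) :
    (∀ (k l : ℕ), 1 ≤ k → 1 ≤ l → ∀ (g : ZMod k → V) (h : ZMod l → V),
      IsSimpleCycle R k g → IsSimpleCycle R l h →
      (∃ i j, g i = h j) → Set.range g = Set.range h) ∧
    (∀ n : ℕ, 1 ≤ n →
      ¬ ∃ g : ZMod n → V,
        ∀ i, (R (g i) (g (i + 1)) ∧ ¬ OnSimpleCycle R (g i) (g (i + 1)))) := by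
  constructor
  · rintro k l hk hl g h ⟨-, hg⟩ ⟨-, hh⟩ ⟨i, j, hij⟩
    exact Set.Subset.antisymm (range_subset hR hk hg hh hij)
      (range_subset hR hl hh hg hij.symm)
  · rintro n hn ⟨g, hgall⟩
    haveI : NeZero n := ⟨by omega⟩
    set u : ℕ → V := fun m => g (m : ZMod n) with hu_def
    have hu : ∀ m, R (u m) (u (m + 1)) := by
      intro m
      have := (hgall (m : ZMod n)).1
      have e : ((m + 1 : ℕ) : ZMod n) = (m : ZMod n) + 1 := by push_cast; ring
      simpa [hu_def, e] using this
    -- periodicity with period n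
    have hper : ∀ m, u (m + n) = u m := by
      intro m
      simp [hu_def]
    -- minimal period
    have hP : ∃ m, 0 < m ∧ u m = u 0 := ⟨n, by omega, by simpa using hper 0⟩
    classical
    set k : ℕ := Nat.find hP with hk_def
    obtain ⟨hkpos, hk0⟩ : 0 < k ∧ u k = u 0 := Nat.find_spec hP
    have hkmin : ∀ m, 0 < m → m < k → u m ≠ u 0 := by
      intro m hm1 hm2 hme
      exact Nat.find_min hP hm2 ⟨hm1, hme⟩
    have hkle : k ≤ n := Nat.find_le ⟨by omega, by simpa using hper 0⟩
    -- period k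
    have hk' : ∀ t, u (t + k) = u t := by
      intro t
      have := nat_shift hR hu hk0.symm t
      simpa [Nat.add_comm] using this.symm
    have hmul : ∀ q t, u (t + q * k) = u t := by
      intro q
      induction q with
      | zero => simp
      | succ q ih =>
        intro t
        have : t + (q + 1) * k = (t + q * k) + k := by ring
        rw [this, hk' (t + q * k), ih t]
    have hmod : ∀ m, u m = u (m % k) := by
      intro m
      conv_lhs => rw [← Nat.mod_add_div m k, Nat.mul_comm]
      exact hmul (m / k) (m % k)
    haveI : NeZero k := ⟨by omega⟩
    set c : ZMod k → V := fun j => u j.val with hc_def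
    have hc : ∀ m : ℕ, c (m : ZMod k) = u m := by
      intro m
      simp only [hc_def, ZMod.val_natCast]
      exact (hmod m).symm
    -- c is a closed walk
    have hcwalk : ∀ j : ZMod k, R (c j) (c (j + 1)) := by
      intro j
      have e : j + 1 = ((j.val + 1 : ℕ) : ZMod k) := by
        push_cast
        simp [ZMod.natCast_val, ZMod.cast_id']
      rw [e, hc]
      have : c j = u j.val := rfl
      rw [this]
      exact hu j.val
    -- c is injective
    have main : ∀ a b : ZMod k, a.val ≤ b.val → u a.val = u b.val → a = b := by
      intro a b hle key
      have hd : u (b.val - a.val) = u 0 := by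
        have h1 := nat_shift hR hu key (n - a.val)
        have hav : a.val < k := a.val_lt
        have e1 : a.val + (n - a.val) = n := by omega
        have e2 : b.val + (n - a.val) = (b.val - a.val) + n := by omega
        rw [e1, e2, hper] at h1
        rw [← h1]
        simpa using hper 0
      by_contra hne
      have hpos : 0 < b.val - a.val := by
        rcases Nat.lt_or_ge a.val b.val with h' | h'
        · omega
        · have : a.val = b.val := by omega
          exact absurd (ZMod.val_injective k this) hne
      exact hkmin _ hpos (by have := b.val_lt; omega) hd
    have hcinj : Function.Injective c := by
      intro a b hab
      have key : u a.val = u b.val := hab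
      rcases le_total a.val b.val with hle | hle
      · exact main a b hle key
      · exact (main b a hle key.symm).symm
    -- the edge (g 0, g 1) is on the cycle c — contradiction
    have i0 : ZMod n := 0
    refine (hgall (0 : ZMod n)).2 ?_
    refine ⟨k, hkpos, c, ⟨hcinj, hcwalk⟩, (0 : ZMod k), ?_, ?_⟩
    · have : c (0 : ZMod k) = u 0 := by simpa using hc 0
      rw [this]
      simp [hu_def]
    · have e : (0 : ZMod k) + 1 = ((1 : ℕ) : ZMod k) := by push_cast; ring
      rw [e, hc]
      have e2 : (0 : ZMod n) + 1 = ((1 : ℕ) : ZMod n) := by push_cast; ring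
      rw [e2]
end

section
/- Let D be a consistent relation on a finite type V, let n ≥ 1, and let g : ZMod n → V be a closed walk of length n in D. Then there exists d ≥ 1 with d dividing n such that the map i ↦ g i is periodic with period d (g i = g j whenever i ≡ j mod d) and the induced map ZMod d → V is an injective simple cycle of length d in D. In particular, every cycle in a consistent instance (hence in any repair) is a repetition of a simple cycle, and the only homomorphic images of an n-cycle in a consistent instance are simple cycles of length dividing n. -/
/-- A closed walk of length `n` in `D`: a map `ZMod n → V` following `D`-edges. -/
def IsClosedWalk {V : Type*} (D : V → V → Prop) (n : ℕ) (g : ZMod n → V) : Prop :=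
  ∀ i, D (g i) (g (i + 1))

theorem stmt1 {V : Type*} [Fintype V] (D : V → V → Prop) (hD : Consistent D)
    (n : ℕ) (hn : 1 ≤ n) (g : ZMod n → V) (hg : IsClosedWalk D n g) :
    ∃ (d : ℕ) (hd : d ∣ n), 1 ≤ d ∧
      (∀ i j : ZMod n, ((i.val : ZMod d) = (j.val : ZMod d)) → g i = g j) ∧
      ∃ g' : ZMod d → V,
        (∀ i : ZMod n, g i = g' (ZMod.castHom hd (ZMod d) i)) ∧
        Function.Injective g' ∧ IsClosedWalk D d g' := by
  haveI : NeZero n := ⟨by omega⟩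
  set h : ℕ → V := fun t => g (t : ZMod n) with hh
  have hstep : ∀ t : ℕ, D (h t) (h (t + 1)) := by
    intro t
    have := hg (t : ZMod n)
    simpa [hh] using this
  have hdet : ∀ a b : ℕ, h a = h b → ∀ k : ℕ, h (a + k) = h (b + k) := by
    intro a b hab k
    induction k with
    | zero => simpa using hab
    | succ k ih =>
        have h1 := hstep (a + k)
        have h2 := hstep (b + k)
        rw [ih] at h1
        have e : ∀ x : ℕ, x + (k + 1) = x + k + 1 := fun x => by omega
        rw [e a, e b]
        exact hD _ _ _ h1 h2
  have hn0 : h n = h 0 := by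
    show g ((n : ℕ) : ZMod n) = g ((0 : ℕ) : ZMod n)
    rw [ZMod.natCast_self, Nat.cast_zero]
  have hP : ∃ m : ℕ, 0 < m ∧ h m = h 0 := ⟨n, by omega, hn0⟩
  classical
  set d := Nat.find hP with hdd
  obtain ⟨hdpos, hd0⟩ := Nat.find_spec hP
  haveI : NeZero d := ⟨by omega⟩
  have hper : ∀ t : ℕ, h (t + d) = h t := by
    intro t
    have := hdet d 0 hd0 t
    simpa [Nat.add_comm] using this
  have hperk : ∀ t k : ℕ, h (t + d * k) = h t := by
    intro t k
    induction k with
    | zero => simp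
    | succ k ih =>
        have := hper (t + d * k)
        rw [ih] at this
        rw [← this]
        ring_nf
  have hmod : ∀ a : ℕ, h a = h (a % d) := by
    intro a
    conv_lhs => rw [← Nat.mod_add_div a d]
    exact hperk _ _
  have hcong : ∀ a b : ℕ, a % d = b % d → h a = h b := by
    intro a b hab
    rw [hmod a, hmod b, hab]
  have hdvd : d ∣ n := by
    rcases Nat.eq_zero_or_pos (n % d) with h0 | hpos
    · exact Nat.dvd_of_mod_eq_zero h0
    · exfalso
      have hlt : n % d < d := Nat.mod_lt _ hdpos
      have : h (n % d) = h 0 := by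
        rw [← hmod n]; exact hn0
      exact Nat.find_min hP hlt ⟨hpos, this⟩
  have hcast : ∀ a b : ℕ, ((a : ZMod d) = (b : ZMod d)) → h a = h b := by
    intro a b hab
    apply hcong
    have := congrArg ZMod.val hab
    simpa [ZMod.val_natCast] using this
  have hgval : ∀ i : ZMod n, g i = h i.val := by
    intro i
    simp [hh, ZMod.natCast_val, ZMod.cast_id]
  refine ⟨d, hdvd, hdpos, ?_, fun i => h i.val, ?_, ?_, ?_⟩
  · intro i j hij
    rw [hgval i, hgval j]
    exact hcast _ _ hij
  · intro i
    rw [hgval i]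
    apply hcast
    have : ((ZMod.castHom hdvd (ZMod d) i).val : ZMod d) = ZMod.castHom hdvd (ZMod d) i := by
      simp [ZMod.natCast_val, ZMod.cast_id]
    rw [this]
    conv_rhs => rw [show i = ((i.val : ℕ) : ZMod n) by simp [ZMod.natCast_val, ZMod.cast_id]]
    simp [map_natCast]
  · intro a b hab
    simp only at hab
    have hav : a.val < d := a.val_lt
    have hbv : b.val < d := b.val_lt
    by_contra hne
    -- wlog a.val < b.val
    rcases Nat.lt_trichotomy a.val b.val with hlt | heq | hlt
    · have key := hdet a.val b.val hab (d - b.val)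
      have h1 : a.val + (d - b.val) < d := by omega
      have h2 : b.val + (d - b.val) = d := by omega
      rw [h2, hd0] at key
      have hpos' : 0 < a.val + (d - b.val) := by omega
      exact Nat.find_min hP h1 ⟨hpos', key⟩
    · exact hne (ZMod.val_injective _ heq)
    · have key := hdet b.val a.val hab.symm (d - a.val)
      have h1 : b.val + (d - a.val) < d := by omega
      have h2 : a.val + (d - a.val) = d := by omega
      rw [h2, hd0] at key
      have hpos' : 0 < b.val + (d - a.val) := by omega
      exact Nat.find_min hP h1 ⟨hpos', key⟩
  · intro i
    simp only
    have : h ((i + 1).val) = h (i.val + 1) := by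
      apply hcast
      push_cast
      simp [ZMod.natCast_val, ZMod.cast_id]
    rw [this]
    exact hstep _
end

section
/- Let W be a nonempty finite type and Q a nonempty relation on W (the canonical database of a Boolean conjunctive query over a single binary relation whose first attribute is a key). Then at least one of the following holds: (i) there exists n ≥ 1 such that for every finite type V and every consistent relation D on V, there is a homomorphism from Q to D if and only if D contains a walk of length n; or (ii) there exist m ≥ 1 and integers k_1, …, k_m ≥ 1 with no k_i dividing k_j for i ≠ j, such that for every finite type V and every consistent relation D on V, there is a homomorphism from Q to D if and only if for each i, D contains a closed walk of length k_i. (Equivalence under the key constraint: every Boolean conjunctive query over one binary relation with the first attribute as key is equivalent on consistent instances either to a path query or to a disjoint collection of cycles whose lengths do not divide one another.) -/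
/-- A walk of length `n` in `D`: a map `f : Fin (n+1) → V` with `D (f i) (f (i+1))`
for all `i < n`. -/
def IsWalk {V : Type*} (D : V → V → Prop) (n : ℕ) (f : Fin (n + 1) → V) : Prop :=
  ∀ i : Fin n, D (f i.castSucc) (f i.succ)

open Function

section Helpers

variable {U : Type}

open Classical in
noncomputable def pick [Nonempty U] : Set U → U :=
  fun s => if h : s.Nonempty then h.choose else Classical.arbitrary U

open Classical in
lemma pick_mem [Nonempty U] {s : Set U} (h : s.Nonempty) : pick s ∈ s := by
  rw [pick, dif_pos h]; exact h.choose_spec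

/-- Forward orbit. -/
def orb (f : U → U) (y : U) : Set U := Set.range (fun t => f^[t] y)

noncomputable def obase [Nonempty U] (f : U → U) (y : U) : U := pick (orb f y)

open Classical in
noncomputable def ooff [Nonempty U] (f : U → U) (y : U) : ℕ :=
  if h : ∃ s, f^[s] (obase f y) = y then Nat.find h else 0

variable {f : U → U} {y : U}

lemma iterate_eq_iterate_modEq (hx : y ∈ periodicPts f)
    {a b : ℕ} (h : a ≡ b [MOD Function.minimalPeriod f y]) : f^[a] y = f^[b] y := by
  rw [← Function.iterate_mod_minimalPeriod_eq (n := a),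
    ← Function.iterate_mod_minimalPeriod_eq (n := b)]
  exact congrArg (fun t => f^[t] y) h

lemma modEq_of_iterate_eq (hx : y ∈ periodicPts f) {a b : ℕ}
    (h : f^[a] y = f^[b] y) : a ≡ b [MOD Function.minimalPeriod f y] := by
  have hpos := Function.minimalPeriod_pos_of_mem_periodicPts hx
  have e : f^[a % Function.minimalPeriod f y] y = f^[b % Function.minimalPeriod f y] y := by
    rw [Function.iterate_mod_minimalPeriod_eq, Function.iterate_mod_minimalPeriod_eq]; exact h
  exact Function.iterate_injOn_Iio_minimalPeriod (f := f) (x := y)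
    (Set.mem_Iio.2 (Nat.mod_lt _ hpos)) (Set.mem_Iio.2 (Nat.mod_lt _ hpos)) e

lemma periodicPts_apply (hy : y ∈ periodicPts f) : f y ∈ periodicPts f := by
  obtain ⟨c, hc, hcy⟩ := hy
  exact Function.mk_mem_periodicPts hc (by simpa using hcy.apply_iterate 1)

lemma orb_apply [Nonempty U] (hy : y ∈ periodicPts f) : orb f (f y) = orb f y := by
  obtain ⟨c, hc, hcy⟩ := hy
  ext w
  constructor
  · rintro ⟨t, rfl⟩
    exact ⟨t + 1, by simp [Function.iterate_succ_apply]⟩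
  · rintro ⟨t, rfl⟩
    refine ⟨t + c - 1, ?_⟩
    show f^[t + c - 1] (f y) = f^[t] y
    have h1 : f^[t + c] y = f^[t] y := by
      rw [Function.iterate_add_apply, hcy.eq]
    calc f^[t + c - 1] (f y) = f^[t + c - 1 + 1] y := (Function.iterate_succ_apply f _ y).symm
      _ = f^[t] y := by rw [show t + c - 1 + 1 = t + c by omega, h1]

lemma obase_mem [Nonempty U] (f : U → U) (y : U) : obase f y ∈ orb f y :=
  pick_mem ⟨y, 0, rfl⟩

lemma exists_ooff [Nonempty U] (hy : y ∈ periodicPts f) : ∃ s, f^[s] (obase f y) = y := by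
  obtain ⟨t, ht⟩ := obase_mem f y
  obtain ⟨c, hc, hcy⟩ := hy
  refine ⟨c * (t + 1) - t, ?_⟩
  rw [← ht]
  show f^[c * (t+1) - t] (f^[t] y) = y
  rw [← Function.iterate_add_apply, Nat.sub_add_cancel (by nlinarith)]
  exact (hcy.mul_const (t+1)).eq

open Classical in
lemma ooff_spec [Nonempty U] (hy : y ∈ periodicPts f) : f^[ooff f y] (obase f y) = y := by
  rw [ooff, dif_pos (exists_ooff hy)]
  exact Nat.find_spec (exists_ooff hy)

lemma obase_apply [Nonempty U] (hy : y ∈ periodicPts f) : obase f (f y) = obase f y :=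
  congrArg pick (orb_apply hy)

lemma obase_periodic [Nonempty U] (hy : y ∈ periodicPts f) : obase f y ∈ periodicPts f := by
  obtain ⟨t, ht⟩ := obase_mem f y
  obtain ⟨c, hc, hcy⟩ := hy
  exact Function.mk_mem_periodicPts hc (ht ▸ hcy.apply_iterate t)

lemma obase_minimalPeriod [Nonempty U] (hy : y ∈ periodicPts f) :
    Function.minimalPeriod f (obase f y) = Function.minimalPeriod f y := by
  obtain ⟨t, ht⟩ := obase_mem f y
  rw [← ht]
  exact Function.minimalPeriod_apply_iterate hy t

lemma ooff_step [Nonempty U] (hy : y ∈ periodicPts f) :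
    (ooff f (f y) : ZMod (Function.minimalPeriod f y))
      = (ooff f y : ZMod (Function.minimalPeriod f y)) + 1 := by
  have hfy : f y ∈ periodicPts f := periodicPts_apply hy
  have h1 : f^[ooff f (f y)] (obase f y) = f y := by
    rw [← obase_apply hy]; exact ooff_spec hfy
  have h2 : f^[ooff f y + 1] (obase f y) = f y := by
    rw [Function.iterate_succ_apply', ooff_spec hy]
  have hmod := modEq_of_iterate_eq (obase_periodic hy) (h1.trans h2.symm)
  rw [obase_minimalPeriod hy] at hmod
  have := (ZMod.natCast_eq_natCast_iff _ _ _).2 hmod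
  push_cast at this
  exact this

lemma iterate_card_mem_periodicPts [Finite U] (f : U → U) (x : U) :
    f^[Nat.card U] x ∈ periodicPts f := by
  haveI := Fintype.ofFinite U
  obtain ⟨i, j, hne, hij⟩ := Fintype.exists_ne_map_eq_of_card_lt
    (fun i : Fin (Fintype.card U + 1) => f^[(i : ℕ)] x) (by simp)
  have key : ∀ a b : ℕ, a < b → b ≤ Fintype.card U → f^[a] x = f^[b] x →
      f^[Nat.card U] x ∈ periodicPts f := by
    intro a b hab hb hEq
    have hper : f^[a] x ∈ periodicPts f := by
      refine Function.mk_mem_periodicPts (n := b - a) (by omega) ?_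
      show f^[b - a] (f^[a] x) = f^[a] x
      rw [← Function.iterate_add_apply, Nat.sub_add_cancel (le_of_lt hab)]
      exact hEq.symm
    obtain ⟨c, hc, hcy⟩ := hper
    have hc2 : f^[Nat.card U] x = f^[Nat.card U - a] (f^[a] x) := by
      rw [← Function.iterate_add_apply, Nat.sub_add_cancel
        (by rw [Nat.card_eq_fintype_card]; omega)]
    rw [hc2]
    exact Function.mk_mem_periodicPts hc (hcy.apply_iterate _)
  rcases lt_or_gt_of_ne hne with h | h
  · exact key i j h (by omega) hij
  · exact key j i h (by omega) hij.symm

end Helpers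

theorem classify {U : Type} [Finite U] (f : U → U) (dom : U → Prop)
    (hfix : ∀ x, ¬ dom x → f x = x) (hdom : ∃ x, dom x) :
    (∃ n : ℕ, 1 ≤ n ∧ ∀ (V : Type) (D : V → V → Prop),
      ((∃ h : U → V, ∀ x, dom x → D (h x) (h (f x))) ↔ ∃ w : Fin (n + 1) → V, IsWalk D n w)) ∨
    (∃ m : ℕ, 1 ≤ m ∧ ∃ k : Fin m → ℕ, (∀ i, 1 ≤ k i) ∧
      (∀ i j, i ≠ j → ¬ (k i ∣ k j)) ∧
      ∀ (V : Type) (D : V → V → Prop),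
        ((∃ h : U → V, ∀ x, dom x → D (h x) (h (f x))) ↔
          ∀ i, ∃ g : ZMod (k i) → V, IsClosedWalk D (k i) g)) := by
  classical
  haveI : Nonempty U := ⟨hdom.choose⟩
  by_cases hcyc : ∃ x, dom x ∧ x ∈ Function.periodicPts f
  case neg =>
    -- CASE A : no cycle in the domain; the query is a path query
    left
    have hdies : ∀ x : U, ∃ d, ¬ dom (f^[d] x) := by
      intro x
      by_contra hcon
      push_neg at hcon
      exact hcyc ⟨f^[Nat.card U] x, hcon _, iterate_card_mem_periodicPts f x⟩
    have hpos : ∀ x, dom x → 1 ≤ Nat.find (hdies x) := by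
      intro x hx
      rcases Nat.eq_zero_or_pos (Nat.find (hdies x)) with h0 | h1
      · exact absurd (h0 ▸ Nat.find_spec (hdies x)) (by simpa using hx)
      · exact h1
    have hstep : ∀ x, dom x → Nat.find (hdies (f x)) = Nat.find (hdies x) - 1 := by
      intro x hx
      have h1 := hpos x hx
      apply le_antisymm
      · apply Nat.find_min' (hdies (f x))
        have h2 := Nat.find_spec (hdies x)
        rw [show Nat.find (hdies x) = (Nat.find (hdies x) - 1) + 1 by omega] at h2
        rwa [Function.iterate_succ_apply] at h2
      · by_contra hcon
        push_neg at hcon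
        have h2 : ¬ dom (f^[Nat.find (hdies (f x)) + 1] x) := by
          rw [Function.iterate_succ_apply]; exact Nat.find_spec (hdies (f x))
        have := Nat.find_min' (hdies x) h2
        omega
    obtain ⟨x₀, hx₀⟩ := Finite.exists_max (fun x => Nat.find (hdies x))
    have hx₀' : ∀ x, Nat.find (hdies x) ≤ Nat.find (hdies x₀) := fun x => hx₀ x
    refine ⟨Nat.find (hdies x₀), ?_, ?_⟩
    · obtain ⟨x, hx⟩ := hdom
      have h1 := hx₀' x
      have h2 := hpos x hx
      omega
    intro V D
    constructor
    · rintro ⟨h, hh⟩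
      refine ⟨fun j => h (f^[(j : ℕ)] x₀), fun i => ?_⟩
      have hidom : dom (f^[(i : ℕ)] x₀) := by
        by_contra hcon
        have h1 := Nat.find_min' (hdies x₀) hcon
        have h2 := i.isLt
        omega
      have hD := hh _ hidom
      rw [show f (f^[(i : ℕ)] x₀) = f^[(i : ℕ) + 1] x₀ from
        (Function.iterate_succ_apply' f _ x₀).symm] at hD
      simpa using hD
    · rintro ⟨w, hw⟩
      refine ⟨fun x => w ⟨Nat.find (hdies x₀) - Nat.find (hdies x), by omega⟩,
        fun x hx => ?_⟩
      have hd1 := hpos x hx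
      have hdn := hx₀' x
      have hfd := hstep x hx
      have hkey := hw ⟨Nat.find (hdies x₀) - Nat.find (hdies x), by omega⟩
      have e2 : ((⟨Nat.find (hdies x₀) - Nat.find (hdies x), by omega⟩ :
            Fin (Nat.find (hdies x₀))).succ : Fin (Nat.find (hdies x₀) + 1))
          = ⟨Nat.find (hdies x₀) - Nat.find (hdies (f x)), by omega⟩ := by
        apply Fin.ext
        simp only [Fin.val_succ, hfd]
        omega
      rw [e2] at hkey
      exact hkey
  case pos =>
    -- CASE B : there is a cycle; the query is a union of cycle queries
    right
    set C : Set ℕ :=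
      {c | ∃ x, dom x ∧ x ∈ Function.periodicPts f ∧ Function.minimalPeriod f x = c} with hC
    have hCpos : ∀ c ∈ C, 0 < c := by
      rintro c ⟨x, hx, hper, rfl⟩
      exact Function.minimalPeriod_pos_of_mem_periodicPts hper
    have hCne : C.Nonempty := by
      obtain ⟨x, hx, hper⟩ := hcyc
      exact ⟨_, x, hx, hper, rfl⟩
    have hCfin : C.Finite := by
      apply Set.Finite.subset (Set.finite_range (fun x : U => Function.minimalPeriod f x))
      rintro c ⟨x, _, _, rfl⟩
      exact ⟨x, rfl⟩
    set K : Set ℕ := {c | c ∈ C ∧ ∀ c' ∈ C, c' ∣ c → c' = c} with hK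
    have hKdiv : ∀ c ∈ C, ∃ c' ∈ K, c' ∣ c := by
      intro c
      induction c using Nat.strong_induction_on with
      | _ c ih =>
        intro hc
        by_cases hk : c ∈ K
        · exact ⟨c, hk, dvd_rfl⟩
        · have hex : ∃ c', c' ∈ C ∧ c' ∣ c ∧ c' ≠ c := by
            by_contra hcon
            push_neg at hcon
            exact hk ⟨hc, fun c' hc' hd => hcon c' hc' hd⟩
          obtain ⟨c', hc', hdvd, hne⟩ := hex
          have hlt : c' < c := lt_of_le_of_ne (Nat.le_of_dvd (hCpos c hc) hdvd) hne
          obtain ⟨c'', hc'', hd⟩ := ih c' hlt hc'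
          exact ⟨c'', hc'', hd.trans hdvd⟩
    have hKfin : K.Finite := hCfin.subset fun c hc => hc.1
    have hKne : K.Nonempty := by
      obtain ⟨c, hc⟩ := hCne
      obtain ⟨c', hc', _⟩ := hKdiv c hc
      exact ⟨c', hc'⟩
    set KF : Finset ℕ := hKfin.toFinset with hKF
    have hKFmem : ∀ c, c ∈ KF ↔ c ∈ K := fun c => hKfin.mem_toFinset
    set k : Fin KF.card → ℕ := fun i => ((KF.equivFin.symm i : KF) : ℕ) with hk
    have hkK : ∀ i, k i ∈ K := fun i => (hKFmem _).1 (KF.equivFin.symm i).2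
    have hkC : ∀ i, k i ∈ C := fun i => (hkK i).1
    have hksurj : ∀ c ∈ K, ∃ i, k i = c := by
      intro c hc
      refine ⟨KF.equivFin ⟨c, (hKFmem c).2 hc⟩, ?_⟩
      simp [hk]
    -- all orbit points of a periodic domain point are in the domain
    have hallper : ∀ x, dom x → x ∈ Function.periodicPts f → ∀ t, dom (f^[t] x) := by
      intro x hxdom hxper t
      by_contra hcon
      have hfixall : ∀ s, f^[s] (f^[t] x) = f^[t] x := by
        intro s
        induction s with
        | zero => rfl
        | succ s ihs => rw [Function.iterate_succ_apply', ihs, hfix _ hcon]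
      obtain ⟨c, hc, hcy⟩ := hxper
      have h1 : f^[c * (t + 1)] x = x := (hcy.mul_const (t + 1)).eq
      have h2 : f^[c * (t + 1)] x = f^[t] x := by
        have htle : t ≤ c * (t + 1) := by nlinarith
        rw [show c * (t + 1) = (c * (t + 1) - t) + t by omega,
          Function.iterate_add_apply]
        exact hfixall _
      have h3 : f^[t] x = x := h2.symm.trans h1
      exact hcon (by rw [h3]; exact hxdom)
    refine ⟨KF.card, ?_, k, fun i => hCpos _ (hkC i), ?_, ?_⟩
    · have : KF.Nonempty := ⟨hKne.choose, (hKFmem _).2 hKne.choose_spec⟩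
      have := Finset.card_pos.2 this
      omega
    · intro i j hij hdvd
      have heq : k i = k j := (hkK j).2 (k i) (hkC i) hdvd
      exact hij (KF.equivFin.symm.injective (Subtype.ext heq))
    · intro V D
      constructor
      · rintro ⟨h, hh⟩ i
        obtain ⟨x, hxdom, hxper, hxmin⟩ := hkC i
        haveI : NeZero (k i) := ⟨by have := hCpos _ (hkC i); omega⟩
        have hall : ∀ t, dom (f^[t] x) := hallper x hxdom hxper
        refine ⟨fun z => h (f^[z.val] x), fun z => ?_⟩
        have hD := hh _ (hall z.val)
        rw [show f (f^[z.val] x) = f^[z.val + 1] x from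
          (Function.iterate_succ_apply' f _ x).symm] at hD
        have hzeq : f^[(z + 1).val] x = f^[z.val + 1] x := by
          apply iterate_eq_iterate_modEq hxper
          rw [hxmin, ← ZMod.natCast_eq_natCast_iff]
          have e1 : (((z + 1).val : ℕ) : ZMod (k i)) = z + 1 := ZMod.natCast_rightInverse _
          have e2 : ((z.val : ℕ) : ZMod (k i)) = z := ZMod.natCast_rightInverse _
          rw [Nat.cast_add, Nat.cast_one, e1, e2]
        show D (h (f^[z.val] x)) (h (f^[(z + 1).val] x))
        rw [hzeq]
        exact hD
      · intro hg
        have hCg : ∀ c ∈ C, ∃ g : ZMod c → V, IsClosedWalk D c g := by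
          intro c hc
          obtain ⟨c', hc'K, hdvd⟩ := hKdiv c hc
          obtain ⟨i, rfl⟩ := hksurj c' hc'K
          obtain ⟨g, hgw⟩ := hg i
          refine ⟨fun z => g (ZMod.castHom hdvd (ZMod (k i)) z), fun z => ?_⟩
          have hD := hgw (ZMod.castHom hdvd (ZMod (k i)) z)
          show D (g _) (g (ZMod.castHom hdvd (ZMod (k i)) (z + 1)))
          rw [map_add, map_one]
          exact hD
        obtain ⟨c₀, hc₀⟩ := hCne
        haveI : NeZero c₀ := ⟨by have := hCpos _ hc₀; omega⟩
        haveI : Nonempty V := by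
          obtain ⟨g, _⟩ := hCg c₀ hc₀
          exact ⟨g 0⟩
        have hgWex : ∀ c : ℕ, ∃ gg : ZMod c → V,
            (c ∈ C → IsClosedWalk D c gg) := by
          intro c
          by_cases hc : c ∈ C
          · obtain ⟨g, hg'⟩ := hCg c hc
            exact ⟨g, fun _ => hg'⟩
          · exact ⟨fun _ => Classical.arbitrary V, fun h => absurd h hc⟩
        choose gW hgW using hgWex
        refine ⟨fun x => if hx : ∃ d, ¬ dom (f^[d] x) then gW c₀ (-(Nat.find hx : ZMod c₀))
          else gW (Function.minimalPeriod f (f^[Nat.card U] x))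
            ((ooff f (f^[Nat.card U] x) : ZMod (Function.minimalPeriod f (f^[Nat.card U] x)))
              - (Nat.card U : ZMod (Function.minimalPeriod f (f^[Nat.card U] x)))),
          fun x hxdom => ?_⟩
        by_cases hx : ∃ d, ¬ dom (f^[d] x)
        · have hfx : ∃ d, ¬ dom (f^[d] (f x)) := by
            obtain ⟨d, hd⟩ := hx
            match d, hd with
            | 0, hd => exact absurd hxdom (by simpa using hd)
            | (d + 1), hd => exact ⟨d, by rwa [← Function.iterate_succ_apply]⟩
          have hd1 : 1 ≤ Nat.find hx := by
            rcases Nat.eq_zero_or_pos (Nat.find hx) with h0 | h1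
            · exact absurd (h0 ▸ Nat.find_spec hx) (by simpa using hxdom)
            · exact h1
          have hstep2 : Nat.find hfx = Nat.find hx - 1 := by
            apply le_antisymm
            · apply Nat.find_min' hfx
              have h2 := Nat.find_spec hx
              rw [show Nat.find hx = (Nat.find hx - 1) + 1 by omega] at h2
              rwa [Function.iterate_succ_apply] at h2
            · by_contra hcon
              push_neg at hcon
              have h2 : ¬ dom (f^[Nat.find hfx + 1] x) := by
                rw [Function.iterate_succ_apply]; exact Nat.find_spec hfx
              have := Nat.find_min' hx h2
              omega
          simp only [dif_pos hx, dif_pos hfx, hstep2]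
          rw [Nat.cast_sub hd1, Nat.cast_one,
            show -((Nat.find hx : ZMod c₀) - 1) = -(Nat.find hx : ZMod c₀) + 1 by ring]
          exact hgW c₀ hc₀ _
        · have hfx : ¬ ∃ d, ¬ dom (f^[d] (f x)) := by
            rintro ⟨d, hd⟩
            exact hx ⟨d + 1, by rwa [Function.iterate_succ_apply]⟩
          have hall : ∀ d, dom (f^[d] x) := by
            intro d
            by_contra hcon
            exact hx ⟨d, hcon⟩
          have hzper : f^[Nat.card U] x ∈ Function.periodicPts f :=
            iterate_card_mem_periodicPts f x
          have hzdom : dom (f^[Nat.card U] x) := hall _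
          have hcC : Function.minimalPeriod f (f^[Nat.card U] x) ∈ C :=
            ⟨f^[Nat.card U] x, hzdom, hzper, rfl⟩
          simp only [dif_neg hx, dif_neg hfx]
          have heq : f^[Nat.card U] (f x) = f (f^[Nat.card U] x) :=
            (Function.iterate_succ_apply f (Nat.card U) x).symm.trans
              (Function.iterate_succ_apply' f (Nat.card U) x)
          rw [heq, Function.minimalPeriod_apply hzper, ooff_step hzper,
            show (ooff f (f^[Nat.card U] x) :
                ZMod (Function.minimalPeriod f (f^[Nat.card U] x))) + 1
                - (Nat.card U : ZMod (Function.minimalPeriod f (f^[Nat.card U] x)))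
              = ((ooff f (f^[Nat.card U] x) :
                ZMod (Function.minimalPeriod f (f^[Nat.card U] x)))
                - (Nat.card U : ZMod (Function.minimalPeriod f (f^[Nat.card U] x)))) + 1 by ring]
          exact hgW _ hcC _


/-- Equivalence generated on the canonical database by the key (functionality)
constraint: successors of identified elements get identified. -/
inductive EQR {W : Type} (Q : W → W → Prop) : W → W → Prop
  | refl (a : W) : EQR Q a a
  | symm {a b : W} : EQR Q a b → EQR Q b a
  | trans {a b c : W} : EQR Q a b → EQR Q b c → EQR Q a c
  | step {a a' b b' : W} : Q a b → Q a' b' → EQR Q a a' → EQR Q b b'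


theorem stmt7 {W : Type} [Fintype W] [Nonempty W] (Q : W → W → Prop)
    (hQ : ∃ a b, Q a b) :
    (∃ n : ℕ, 1 ≤ n ∧ ∀ (V : Type) (_ : Fintype V) (D : V → V → Prop), Consistent D →
      ((∃ h : W → V, ∀ a b, Q a b → D (h a) (h b)) ↔ ∃ f : Fin (n + 1) → V, IsWalk D n f)) ∨
    (∃ m : ℕ, 1 ≤ m ∧ ∃ k : Fin m → ℕ, (∀ i, 1 ≤ k i) ∧
      (∀ i j, i ≠ j → ¬ (k i ∣ k j)) ∧
      ∀ (V : Type) (_ : Fintype V) (D : V → V → Prop), Consistent D →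
        ((∃ h : W → V, ∀ a b, Q a b → D (h a) (h b)) ↔
          ∀ i : Fin m, ∃ g : ZMod (k i) → V, IsClosedWalk D (k i) g)) := by
  classical
  let s : Setoid W := ⟨EQR Q, ⟨EQR.refl, fun h => h.symm, fun h h' => h.trans h'⟩⟩
  let U := Quotient s
  haveI : Finite U := Quotient.finite s
  let Q' : U → U → Prop := fun x y =>
    ∃ a b, Q a b ∧ Quotient.mk s a = x ∧ Quotient.mk s b = y
  have Q'func : ∀ x y y', Q' x y → Q' x y' → y = y' := by
    rintro x y y' ⟨a, b, hab, rfl, rfl⟩ ⟨a', b', hab', ha', rfl⟩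
    have he : EQR Q a a' := Quotient.exact ha'.symm
    exact Quotient.sound (EQR.step hab hab' he)
  let f : U → U := fun x => if h : ∃ y, Q' x y then h.choose else x
  let dom : U → Prop := fun x => ∃ y, Q' x y
  have hfix : ∀ x, ¬ dom x → f x = x := fun x hx => dif_neg hx
  have hQf : ∀ x, ∀ hx : dom x, Q' x (f x) := by
    intro x hx
    have hfx : f x = hx.choose := dif_pos hx
    rw [hfx]
    exact hx.choose_spec
  obtain ⟨a0, b0, hab0⟩ := hQ
  have hdom : ∃ x, dom x := ⟨Quotient.mk s a0, Quotient.mk s b0, a0, b0, hab0, rfl, rfl⟩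
  have homiff : ∀ (V : Type) (D : V → V → Prop), Consistent D →
      ((∃ h : W → V, ∀ a b, Q a b → D (h a) (h b)) ↔
        (∃ h : U → V, ∀ x, dom x → D (h x) (h (f x)))) := by
    intro V D hD
    constructor
    · rintro ⟨h, hh⟩
      have hinv : ∀ a b, EQR Q a b → h a = h b := by
        intro a b e
        induction e with
        | refl a => rfl
        | symm _ ih => exact ih.symm
        | trans _ _ ih1 ih2 => exact ih1.trans ih2
        | step q1 q2 _ ih =>
          have d1 := hh _ _ q1
          have d2 := hh _ _ q2
          rw [← ih] at d2
          exact hD _ _ _ d1 d2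
      refine ⟨Quotient.lift h hinv, ?_⟩
      intro x hx
      obtain ⟨a, b, hab, hax, hbfx⟩ := hQf x hx
      rw [← hbfx, ← hax]
      exact hh a b hab
    · rintro ⟨h, hh⟩
      refine ⟨fun a => h (Quotient.mk s a), ?_⟩
      intro a b hab
      have hdoma : dom (Quotient.mk s a) := ⟨Quotient.mk s b, a, b, hab, rfl, rfl⟩
      have h1 : Q' (Quotient.mk s a) (f (Quotient.mk s a)) := hQf _ hdoma
      have h2 : f (Quotient.mk s a) = Quotient.mk s b :=
        Q'func _ _ _ h1 ⟨a, b, hab, rfl, rfl⟩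
      have h3 := hh _ hdoma
      rwa [h2] at h3
  rcases classify f dom hfix hdom with ⟨n, hn, hiff⟩ | ⟨m, hm, k, h1, h2, hiff⟩
  · exact Or.inl ⟨n, hn, fun V _ D hD => (homiff V D hD).trans (hiff V D)⟩
  · exact Or.inr ⟨m, hm, k, h1, h2, fun V _ D hD => (homiff V D hD).trans (hiff V D)⟩
end

section
/- Let R be a relation on a finite type V. Then (∃ a, R a a ∧ ∀ b, b ≠ a → ¬ R a b) holds if and only if every repair D of R contains a self-loop (∃ a, D a a). (This gives a first-order rewriting of consistent answering of the 1-Cycle query ∃x R(x,x).) -/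
/-- `D` is a (subset) repair of `R`: a maximal consistent subrelation of `R`. -/
def Repair {V : Type*} (R D : V → V → Prop) : Prop :=
  (∀ a b, D a b → R a b) ∧ Consistent D ∧
  ∀ D' : V → V → Prop, Consistent D' → (∀ a b, D a b → D' a b) →
    (∀ a b, D' a b → R a b) → D' = D

theorem stmt10 {V : Type*} [Fintype V] (R : V → V → Prop) :
    (∃ a, R a a ∧ ∀ b, b ≠ a → ¬ R a b) ↔
    (∀ D : V → V → Prop, Repair R D → ∃ a, D a a) := by
  classical
  constructor
  · rintro ⟨a, hRaa, huniq⟩ D ⟨hsub, hcons, hmax⟩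
    refine ⟨a, ?_⟩
    by_cases h : ∃ b, D a b
    · obtain ⟨b, hb⟩ := h
      have : b = a := by
        by_contra hne
        exact huniq b hne (hsub a b hb)
      rwa [this] at hb
    · -- D has no tuple with key a; extend by (a,a)
      set D' : V → V → Prop := fun x y => D x y ∨ (x = a ∧ y = a) with hD'
      have hcons' : Consistent D' := by
        rintro x y y' (hy | ⟨rfl, rfl⟩) (hy' | ⟨hx', rfl⟩)
        · exact hcons x y y' hy hy'
        · exact absurd ⟨y, hx' ▸ hy⟩ h
        · exact absurd ⟨y', hy'⟩ h
        · rfl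
      have hsub' : ∀ x y, D' x y → R x y := by
        rintro x y (hy | ⟨rfl, rfl⟩)
        · exact hsub x y hy
        · exact hRaa
      have := hmax D' hcons' (fun x y hxy => Or.inl hxy) hsub'
      have : D' a a := Or.inr ⟨rfl, rfl⟩
      rw [hmax D' hcons' (fun x y hxy => Or.inl hxy) hsub'] at this
      exact this
  · intro hall
    by_contra hno
    push_neg at hno
    -- for each a with R a a, there is b ≠ a with R a b
    have key : ∀ a, R a a → ∃ b, b ≠ a ∧ R a b := by
      intro a ha
      obtain ⟨b, hb1, hb2⟩ := hno a ha
      exact ⟨b, hb1, hb2⟩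
    -- choose a value for each key
    let g : V → V := fun a =>
      if h : ∃ b, b ≠ a ∧ R a b then h.choose
      else if h2 : ∃ b, R a b then h2.choose else a
    have hg : ∀ a, (∃ b, R a b) → R a (g a) := by
      intro a ha
      by_cases h : ∃ b, b ≠ a ∧ R a b
      · simp only [g, dif_pos h]; exact h.choose_spec.2
      · simp only [g, dif_neg h, dif_pos ha]; exact ha.choose_spec
    set D : V → V → Prop := fun x y => R x y ∧ y = g x with hD
    have hsub : ∀ x y, D x y → R x y := fun x y h => h.1
    have hcons : Consistent D := by
      rintro x y y' ⟨_, rfl⟩ ⟨_, rfl⟩; rfl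
    have hmax : ∀ D' : V → V → Prop, Consistent D' → (∀ a b, D a b → D' a b) →
        (∀ a b, D' a b → R a b) → D' = D := by
      intro D' hc' hDD' hD'R
      funext x y
      apply propext
      constructor
      · intro hxy
        have hR : R x y := hD'R x y hxy
        have hDx : D x (g x) := ⟨hg x ⟨y, hR⟩, rfl⟩
        have : y = g x := hc' x y (g x) hxy (hDD' x (g x) hDx)
        exact ⟨hR, this⟩
      · exact hDD' x y
    obtain ⟨a, ⟨hRa, hga⟩⟩ := hall D ⟨hsub, hcons, hmax⟩
    -- D a a means R a a and a = g a, but g a ≠ a since R a a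
    have h : ∃ b, b ≠ a ∧ R a b := key a hRa
    have : g a = h.choose := by simp only [g, dif_pos h]
    exact h.choose_spec.1 (this ▸ hga.symm)
end

section
/- Let R be a relation on a finite type V. Then (∃ a b c, R a b ∧ R b c ∧ ∀ b', R a b' → ∃ c', R b' c') holds if and only if every repair D of R contains a walk of length 2 (∃ a b c, D a b ∧ D b c). (Correctness of the first-order rewriting ψ₂ of consistent answering of the 2-Path query.) -/
theorem stmt11 {V : Type*} [Fintype V] (R : V → V → Prop) :
    (∃ a b c, R a b ∧ R b c ∧ ∀ b', R a b' → ∃ c', R b' c') ↔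
    (∀ D : V → V → Prop, Repair R D → ∃ a b c, D a b ∧ D b c) := by
  classical
  constructor
  · rintro ⟨a, b, c, hab, hbc, h⟩ D ⟨hsub, hcons, hmax⟩
    have tot : ∀ x, (∃ y, R x y) → ∃ y, D x y := by
      rintro x ⟨y, hxy⟩
      by_contra hno
      push_neg at hno
      have hc : Consistent (fun u v => D u v ∨ (u = x ∧ v = y)) := by
        rintro u v v' (h1 | ⟨hux, hvy⟩) (h2 | ⟨h2a, h2b⟩)
        · exact hcons u v v' h1 h2
        · exact absurd (h2a ▸ h1) (hno v)
        · exact absurd (hux ▸ h2) (hno v')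
        · exact hvy.trans h2b.symm
      have heq := hmax _ hc (fun u v hv => Or.inl hv)
        (by rintro u v (hv | ⟨rfl, rfl⟩); exacts [hsub _ _ hv, hxy])
      have : D x y := heq ▸ (Or.inr ⟨rfl, rfl⟩ : D x y ∨ (x = x ∧ y = y))
      exact hno y this
    obtain ⟨b', hab'⟩ := tot a ⟨b, hab⟩
    obtain ⟨c', hb'c'⟩ := h b' (hsub _ _ hab')
    obtain ⟨c'', hc''⟩ := tot b' ⟨c', hb'c'⟩
    exact ⟨a, b', c'', hab', hc''⟩
  · intro h
    by_contra hL
    push_neg at hL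
    -- hL : ∀ a b c, R a b → R b c → ∃ b', R a b' ∧ ∀ c', ¬ R b' c'
    set sink : V → Prop := fun b => ∀ c, ¬ R b c with hsink
    let pick : V → V := fun a =>
      if h1 : ∃ b, R a b ∧ sink b then h1.choose
      else if h2 : ∃ b, R a b then h2.choose else a
    have pickR : ∀ a, (∃ b, R a b) → R a (pick a) := by
      intro a ha
      by_cases h1 : ∃ b, R a b ∧ sink b
      · simp only [pick, dif_pos h1]; exact h1.choose_spec.1
      · simp only [pick, dif_neg h1, dif_pos ha]; exact ha.choose_spec
    have pickSink : ∀ a, (∃ b, R a b ∧ sink b) → sink (pick a) := by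
      intro a h1
      simp only [pick, dif_pos h1]; exact h1.choose_spec.2
    set D : V → V → Prop := fun a b => (∃ y, R a y) ∧ b = pick a with hDdef
    have hsub : ∀ a b, D a b → R a b := by
      rintro a b ⟨ha, rfl⟩; exact pickR a ha
    have hcons : Consistent D := by
      rintro a b b' ⟨_, rfl⟩ ⟨_, rfl⟩; rfl
    have hmax : ∀ D' : V → V → Prop, Consistent D' → (∀ a b, D a b → D' a b) →
        (∀ a b, D' a b → R a b) → D' = D := by
      intro D' hc hincl hsub'
      funext u v
      apply propext
      constructor
      · intro huv
        have hRu : ∃ y, R u y := ⟨v, hsub' _ _ huv⟩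
        have : D' u (pick u) := hincl _ _ ⟨hRu, rfl⟩
        exact ⟨hRu, hc u v (pick u) huv this⟩
      · exact hincl u v
    obtain ⟨a, b, c, hab, hbc⟩ := h D ⟨hsub, hcons, hmax⟩
    have hRab := hsub _ _ hab
    have hRbc := hsub _ _ hbc
    obtain ⟨b', hb'⟩ := hL a b c hRab hRbc
    have : sink (pick a) := pickSink a ⟨b', hb'.1, hb'.2⟩
    rw [← hab.2] at this
    exact this c hRbc
end

section
/- Let R be a relation on a finite type V. Then (∃ x y z w, R x y ∧ R y z ∧ R z w ∧ ∀ y', R x y' → ∃ z' w', R y' z' ∧ R z' w' ∧ ∀ w'', R y' w'' → ∃ z'', R w'' z'') holds if and only if every repair D of R contains a walk of length 3 (∃ a b c d, D a b ∧ D b c ∧ D c d). (Correctness of the first-order rewriting ψ₃ of consistent answering of the 3-Path query.) -/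
theorem stmt12 {V : Type*} [Fintype V] (R : V → V → Prop) :
    (∃ x y z w, R x y ∧ R y z ∧ R z w ∧
      ∀ y', R x y' → ∃ z' w', R y' z' ∧ R z' w' ∧ ∀ w'', R y' w'' → ∃ z'', R w'' z'') ↔
    (∀ D : V → V → Prop, Repair R D → ∃ a b c d, D a b ∧ D b c ∧ D c d) := by
  classical
  constructor
  · rintro ⟨x, y, z, w, hxy, hyz, hzw, hx⟩ D ⟨hsub, hcons, hmax⟩
    -- a repair is total on keys with nonempty image
    have total : ∀ a b, R a b → ∃ b', D a b' := by
      intro a b hab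
      by_contra h
      push_neg at h
      have heq : (fun p q => D p q ∨ (p = a ∧ q = b)) = D := by
        apply hmax
        · intro p q q' h1 h2
          rcases h1 with h1 | ⟨rfl, rfl⟩
          · rcases h2 with h2 | ⟨rfl, rfl⟩
            · exact hcons _ _ _ h1 h2
            · exact absurd h1 (h _)
          · rcases h2 with h2 | ⟨-, rfl⟩
            · exact absurd h2 (h _)
            · rfl
        · intro p q hpq; exact Or.inl hpq
        · intro p q hpq
          rcases hpq with hpq | ⟨rfl, rfl⟩
          · exact hsub _ _ hpq
          · exact hab
      have : D a b := by
        rw [← heq]; exact Or.inr ⟨rfl, rfl⟩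
      exact h b this
    obtain ⟨y', hy'⟩ := total x y hxy
    obtain ⟨z', w', hz', hw', hall⟩ := hx y' (hsub _ _ hy')
    obtain ⟨w'', hw''⟩ := total y' z' hz'
    obtain ⟨z'', hz''⟩ := hall w'' (hsub _ _ hw'')
    obtain ⟨d, hd⟩ := total w'' z'' hz''
    exact ⟨x, y', w'', d, hy', hw'', hd⟩
  · intro hRHS
    by_contra hψ
    push_neg at hψ
    -- rank function
    set g : V → ℕ := fun v =>
      if ∃ c, R v c then (if ∃ c, R v c ∧ ¬∃ d, R c d then 1 else 2) else 0 with hg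
    have g0 : ∀ v, 1 ≤ g v → ∃ c, R v c := by
      intro v hv
      by_contra hc
      simp only [hg, if_neg hc] at hv
      omega
    have g2 : ∀ v, 2 ≤ g v → ∀ c, R v c → ∃ d, R c d := by
      intro v hv c hc
      by_contra hd
      have h1 : ∃ c, R v c := ⟨c, hc⟩
      have h2 : ∃ c, R v c ∧ ¬∃ d, R c d := ⟨c, hc, hd⟩
      simp only [hg, if_pos h1, if_pos h2] at hv
      omega
    have hmin : ∀ a, (∃ b, R a b) → ∃ b, R a b ∧ ∀ b', R a b' → g b ≤ g b' := by
      rintro a ⟨b0, hb0⟩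
      obtain ⟨b, hb, hbm⟩ := Finset.exists_min_image
        (Finset.univ.filter (fun c => R a c)) g ⟨b0, by simp [hb0]⟩
      exact ⟨b, by simpa using hb, fun b' hb' => hbm b' (by simp [hb'])⟩
    set D : V → V → Prop :=
      fun a b => ∃ h : ∃ c, R a c ∧ ∀ c', R a c' → g c ≤ g c', b = h.choose with hD
    have Dsub : ∀ a b, D a b → R a b ∧ ∀ c', R a c' → g b ≤ g c' := by
      rintro a b ⟨h, rfl⟩
      exact h.choose_spec
    have hrep : Repair R D := by
      refine ⟨fun a b hab => (Dsub a b hab).1, ?_, ?_⟩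
      · rintro a b b' ⟨h1, rfl⟩ ⟨h2, rfl⟩
        rfl
      · intro D' hc' hDD' hD'R
        funext a b
        apply propext
        constructor
        · intro hab
          have h : ∃ c, R a c ∧ ∀ c', R a c' → g c ≤ g c' := hmin a ⟨b, hD'R a b hab⟩
          have hDc : D a h.choose := ⟨h, rfl⟩
          have := hc' a b h.choose hab (hDD' _ _ hDc)
          exact this ▸ hDc
        · exact hDD' a b
    obtain ⟨a, b, c, d, hab, hbc, hcd⟩ := hRHS D hrep
    obtain ⟨hRab, hbm⟩ := Dsub a b hab
    obtain ⟨hRbc, hcm⟩ := Dsub b c hbc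
    obtain ⟨hRcd, -⟩ := Dsub c d hcd
    -- g c ≥ 1 since c has successor d
    have hgc : 1 ≤ g c := by
      simp only [hg, if_pos (⟨d, hRcd⟩ : ∃ e, R c e)]
      split <;> omega
    -- every successor of b has g ≥ 1, hence has a successor, hence g b = 2
    have hgb : 2 ≤ g b := by
      have hns : ¬∃ c', R b c' ∧ ¬∃ d', R c' d' := by
        rintro ⟨c', hc', hd'⟩
        exact hd' (g0 c' (le_trans hgc (hcm c' hc')))
      simp only [hg, if_pos (⟨c, hRbc⟩ : ∃ e, R b e), if_neg hns, le_refl]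
    -- so every successor of a has g ≥ 2
    obtain ⟨y', hRay', hy'⟩ := hψ a b c d hRab hRbc hRcd
    have hgy' : 2 ≤ g y' := le_trans hgb (hbm y' hRay')
    obtain ⟨z', hz'⟩ := g0 y' (by omega)
    obtain ⟨w', hw'⟩ := g2 y' hgy' z' hz'
    obtain ⟨w'', hRw'', hdead⟩ := hy' z' w' hz' hw'
    obtain ⟨u, hu⟩ := g2 y' hgy' w'' hRw''
    exact hdead u hu
end

section
/- For every n ≥ 2 there exists a first-order sentence φ in the language with a single binary relation symbol such that for every finite structure in this language, with underlying set V and interpreted relation R : V → V → Prop, the structure satisfies φ if and only if every repair of R contains a walk of length n. (Consistent answering of every path query is first-order rewritable.) -/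
open FirstOrder

/-- The structure in the language of a single binary relation symbol given by interpreting
the relation symbol as `R`. -/
def relStructure {V : Type*} (R : V → V → Prop) : Language.graph.Structure V where
  RelMap | .adj => fun x => R (x 0) (x 1)

/-!
Call `x` `k`-certain (`CertainWalk R k x`) when `k = 0`, or when `k = j + 1`, `x` has an
`R`-successor and all its `R`-successors are `j`-certain; this recursion is first-order. A repair
is exactly a consistent subrelation of `R` keeping one outgoing edge at every vertex of the
domain of `R`, so from an `n`-certain vertex every repair has a walk of length `n`. Conversely,
if no vertex is `n`-certain, rank each vertex by the least `k` for which it is not `k`-certain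
and let the repair keep, at each vertex, an edge towards a successor of smaller rank; every walk
of this repair has length less than `n`.
-/

open Language

section

variable {V : Type*} {R D : V → V → Prop}

theorem repair_iff :
    Repair R D ↔ (∀ a b, D a b → R a b) ∧ Consistent D ∧ ∀ a, (∃ b, R a b) → ∃ b, D a b := by
  refine ⟨fun hD => ⟨hD.1, hD.2.1, fun a ⟨b, hab⟩ => ?_⟩, fun ⟨hsub, hcon, htot⟩ => ?_⟩
  · by_contra! hna
    let D' : V → V → Prop := fun x y => D x y ∨ (x = a ∧ y = b)
    have hcon' : Consistent D' := by
      rintro x y y' (hy | ⟨rfl, rfl⟩) (hy' | ⟨hx, rfl⟩)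
      exacts [hD.2.1 x y y' hy hy', (hna y (hx ▸ hy)).elim, (hna y' hy').elim, rfl]
    have hD' : D' = D := hD.2.2 D' hcon' (fun x y => Or.inl)
      (by rintro x y (hy | ⟨rfl, rfl⟩); exacts [hD.1 x y hy, hab])
    exact hna b (hD' ▸ Or.inr ⟨rfl, rfl⟩)
  · refine ⟨hsub, hcon, fun D' hcon' hDD' hD'R => funext fun a => funext fun b => propext ?_⟩
    refine ⟨fun hab => ?_, hDD' a b⟩
    obtain ⟨b', hab'⟩ := htot a ⟨b, hD'R a b hab⟩
    rwa [hcon' a b b' hab (hDD' a b' hab')]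

theorem isWalk_cons {k : ℕ} {x : V} {g : Fin (k + 1) → V} :
    IsWalk D (k + 1) (Fin.cons x g) ↔ D x (g 0) ∧ IsWalk D k g := by
  simp only [IsWalk, Fin.forall_fin_succ, Fin.castSucc_zero, Fin.cons_zero,
    ← Fin.succ_castSucc, Fin.cons_succ]

variable (R) in
def CertainWalk : ℕ → V → Prop
  | 0 => fun _ => True
  | k + 1 => fun x => (∃ y, R x y) ∧ ∀ y, R x y → CertainWalk k y

theorem certainWalk_antitone (x : V) : Antitone fun k => CertainWalk R k x := by
  refine antitone_nat_of_succ_le fun k => ?_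
  induction k generalizing x with
  | zero => exact fun _ => trivial
  | succ k ih => exact fun ⟨hx, hsucc⟩ => ⟨hx, fun y hy => ih y (hsucc y hy)⟩

theorem Repair.exists_isWalk_of_certainWalk (hD : Repair R D) :
    ∀ {k : ℕ} {x : V}, CertainWalk R k x → ∃ f : Fin (k + 1) → V, IsWalk D k f ∧ f 0 = x
  | 0, x, _ => ⟨fun _ => x, finZeroElim, rfl⟩
  | _ + 1, x, ⟨hx, hsucc⟩ => by
    obtain ⟨y, hxy⟩ := (repair_iff.mp hD).2.2 x hx
    obtain ⟨g, hg, rfl⟩ := hD.exists_isWalk_of_certainWalk (hsucc _ (hD.1 x _ hxy))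
    exact ⟨Fin.cons x g, isWalk_cons.mpr ⟨hxy, hg⟩, rfl⟩

theorem certainWalk_of_isWalk
    (hD : ∀ a b k, D a b → CertainWalk R k b → CertainWalk R (k + 1) a) :
    ∀ {k : ℕ} {f : Fin (k + 1) → V}, IsWalk D k f → CertainWalk R k (f 0)
  | 0, _, _ => trivial
  | _ + 1, f, hf => by
    rw [← Fin.cons_self_tail f, isWalk_cons] at hf
    exact hD _ _ _ hf.1 (certainWalk_of_isWalk hD hf.2)

/-- The successor `b` is one of minimal rank, the rank of `a` being the least `k` with
`¬ CertainWalk R k a`. -/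
theorem exists_rel_forall_certainWalk_succ {a : V} (hrank : ∃ k, ¬ CertainWalk R k a)
    (ha : ∃ b, R a b) : ∃ b, R a b ∧ ∀ k, CertainWalk R k b → CertainWalk R (k + 1) a := by
  classical
  obtain ⟨j, hj⟩ : ∃ j, Nat.find hrank = j + 1 :=
    Nat.exists_eq_succ_of_ne_zero fun h0 => Nat.find_spec hrank (h0 ▸ trivial)
  have hnot : ¬ CertainWalk R (j + 1) a := hj ▸ Nat.find_spec hrank
  obtain ⟨b, hab, hb⟩ : ∃ b, R a b ∧ ¬ CertainWalk R j b := by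
    simpa [CertainWalk, ha] using hnot
  refine ⟨b, hab, fun k hk => of_not_not fun hka => hb (certainWalk_antitone b ?_ hk)⟩
  have := Nat.find_min' hrank hka
  omega

theorem exists_repair_certainWalk_succ (hrank : ∀ a, ∃ k, ¬ CertainWalk R k a) :
    ∃ D, Repair R D ∧ ∀ a b k, D a b → CertainWalk R k b → CertainWalk R (k + 1) a := by
  choose s hsR hs using fun a => exists_rel_forall_certainWalk_succ (R := R) (hrank a)
  refine ⟨fun a b => ∃ h, s a h = b, repair_iff.mpr ⟨?_, ?_, fun a ha => ⟨s a ha, ha, rfl⟩⟩, ?_⟩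
  · rintro a _ ⟨h, rfl⟩
    exact hsR a h
  · rintro a _ _ ⟨h, rfl⟩ ⟨h', rfl⟩
    rfl
  · rintro a _ k ⟨h, rfl⟩
    exact hs a h k

end

/-- `certainWalkFormula k m i` expresses `CertainWalk R k` at the bound variable `i` of `m`. -/
def certainWalkFormula : ℕ → (m : ℕ) → Fin m → Language.graph.BoundedFormula Empty m
  | 0, _, _ => ⊤
  | k + 1, m, i =>
    (∃' Language.adj.boundedFormula₂ (&i.castSucc) (&(Fin.last m))) ⊓
      ∀' (Language.adj.boundedFormula₂ (&i.castSucc) (&(Fin.last m)) ⟹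
        certainWalkFormula k (m + 1) (Fin.last m))

theorem realize_certainWalkFormula {V : Type*} (R : V → V → Prop) (k : ℕ) :
    ∀ {m : ℕ} (i : Fin m) (v : Empty → V) (xs : Fin m → V),
      @BoundedFormula.Realize Language.graph V (relStructure R) Empty m (certainWalkFormula k m i)
        v xs ↔ CertainWalk R k (xs i) := by
  induction k with
  | zero => simp [certainWalkFormula, CertainWalk]
  | succ k ih =>
    intro m i v xs
    simp only [certainWalkFormula, CertainWalk, BoundedFormula.realize_inf,
      BoundedFormula.realize_ex, BoundedFormula.realize_all, BoundedFormula.realize_imp,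
      BoundedFormula.realize_rel₂, Function.comp_apply, Term.realize_var, Sum.elim_inr,
      Fin.snoc_castSucc, Fin.snoc_last, ih]
    exact Iff.rfl

def certainWalkSentence (n : ℕ) : Language.graph.Sentence :=
  ∃' certainWalkFormula n 1 0

theorem realize_certainWalkSentence {V : Type*} (R : V → V → Prop) (n : ℕ) :
    @Sentence.Realize Language.graph V (relStructure R) (certainWalkSentence n) ↔
      ∃ x, CertainWalk R n x := by
  simp only [certainWalkSentence, Sentence.Realize, Formula.Realize, BoundedFormula.realize_ex,
    realize_certainWalkFormula]
  rfl

theorem stmt13_general (n : ℕ) :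
    ∃ φ : Language.graph.Sentence,
      ∀ (V : Type) (_ : Fintype V) (R : V → V → Prop),
        (@FirstOrder.Language.Sentence.Realize Language.graph V (relStructure R) φ) ↔
        (∀ D : V → V → Prop, Repair R D → ∃ f : Fin (n + 1) → V, IsWalk D n f) := by
  refine ⟨certainWalkSentence n, fun V _ R => ?_⟩
  rw [realize_certainWalkSentence]
  constructor
  · rintro ⟨x, hx⟩ D hD
    obtain ⟨f, hf, -⟩ := hD.exists_isWalk_of_certainWalk hx
    exact ⟨f, hf⟩
  · intro hwalk
    by_contra! hnone
    obtain ⟨D, hD, hstep⟩ := exists_repair_certainWalk_succ fun a => ⟨n, hnone a⟩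
    obtain ⟨f, hf⟩ := hwalk D hD
    exact hnone _ (certainWalk_of_isWalk hstep hf)

theorem stmt13 (n : ℕ) (hn : 2 ≤ n) :
    ∃ φ : Language.graph.Sentence,
      ∀ (V : Type) (_ : Fintype V) (R : V → V → Prop),
        (@FirstOrder.Language.Sentence.Realize Language.graph V (relStructure R) φ) ↔
        (∀ D : V → V → Prop, Repair R D → ∃ f : Fin (n + 1) → V, IsWalk D n f) :=
  stmt13_general n
end

section
/- Let m ≥ 1, let V = Fin (m+1), and let R be the relation with R i j iff (j = i + 1 or i = j + 1) (a simple path in which every edge is doubled, i.e., each consecutive pair forms a 2-cycle). Then every repair D of R contains a 2-cycle: there exist a ≠ b with D a b and D b a. -/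
theorem stmt16 (m : ℕ) (hm : 1 ≤ m) :
    ∀ D : Fin (m + 1) → Fin (m + 1) → Prop,
      Repair (fun i j : Fin (m + 1) => (j : ℕ) = (i : ℕ) + 1 ∨ (i : ℕ) = (j : ℕ) + 1) D →
      ∃ a b : Fin (m + 1), a ≠ b ∧ D a b ∧ D b a := by
  classical
  intro D hD
  by_contra hno
  push_neg at hno
  obtain ⟨hsub, hcons, hmax⟩ := hD
  have hne : ∀ a b : Fin (m+1), D a b → a ≠ b := by
    intro a b hab e
    subst e
    rcases hsub a a hab with h | h <;> omega
  have hno2 : ∀ a b, D a b → ¬ D b a := by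
    intro a b hab hba
    exact hno a b (hne a b hab) hab hba
  -- every vertex has an outgoing D-edge
  have htot : ∀ a : Fin (m+1), ∃ b, D a b := by
    intro a
    by_contra hna
    push_neg at hna
    obtain ⟨b, hRab⟩ : ∃ b : Fin (m+1), (b:ℕ) = (a:ℕ) + 1 ∨ (a:ℕ) = (b:ℕ) + 1 := by
      by_cases h : (a:ℕ) < m
      · exact ⟨⟨(a:ℕ)+1, by omega⟩, Or.inl rfl⟩
      · have ha : (a:ℕ) = m := by have := a.isLt; omega
        exact ⟨⟨m-1, by omega⟩, Or.inr (by simp; omega)⟩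
    have hD' := hmax (fun x y => D x y ∨ (x = a ∧ y = b)) ?_ ?_ ?_
    · have hab : D a b := by rw [← hD']; exact Or.inr ⟨rfl, rfl⟩
      exact hna b hab
    · intro x y y' h1 h2
      rcases h1 with h1 | ⟨hx, hy⟩
      · rcases h2 with h2 | ⟨hx2, hy2⟩
        · exact hcons x y y' h1 h2
        · exact absurd (hx2 ▸ h1) (hna y)
      · rcases h2 with h2 | ⟨hx2, hy2⟩
        · exact absurd (hx ▸ h2) (hna y')
        · rw [hy, hy2]
    · intro x y h; exact Or.inl h
    · intro x y h
      rcases h with h | ⟨rfl, rfl⟩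
      · exact hsub x y h
      · exact hRab
  -- set of indices whose D-edge points backwards is nonempty
  have hlast : ∃ n, ∃ k b : Fin (m+1), (k:ℕ) = n ∧ D k b ∧ (k:ℕ) = (b:ℕ) + 1 := by
    obtain ⟨b, hb⟩ := htot ⟨m, by omega⟩
    rcases hsub _ _ hb with h | h
    · exfalso; have := b.isLt; simp at h; omega
    · exact ⟨m, ⟨m, by omega⟩, b, by simp, hb, h⟩
  obtain ⟨k, b, hkn, hkb, hk1⟩ := Nat.find_spec hlast
  obtain ⟨c, hbc⟩ := htot b
  rcases hsub _ _ hbc with h | h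
  · have hck : c = k := by apply Fin.ext; omega
    subst hck
    exact hno2 b c hbc hkb
  · exact Nat.find_min hlast (by omega) ⟨b, c, rfl, hbc, h⟩
end

section
/- Let m ≥ 2, let V be the type Fin (m+1) together with one extra vertex w, and let R consist of the doubled-path edges R i j iff (j = i + 1 or i = j + 1) on Fin (m+1), together with one additional outgoing edge from some interior vertex i₀ (0 < i₀ < m) to w. Then R has a repair D containing no 2-cycle: there are no a ≠ b with D a b and D b a. (Augmenting the doubled path with a single outgoing edge allows a repair with no 2-cycles.) -/
/-- The doubled path on `Fin (m+1)`, augmented with a single extra edge from the interior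
vertex `i₀` to the extra vertex `Sum.inr ()`. -/
def doubledPathPlus (m : ℕ) (i₀ : Fin (m + 1)) :
    (Fin (m + 1) ⊕ Unit) → (Fin (m + 1) ⊕ Unit) → Prop
  | Sum.inl i, Sum.inl j => (j : ℕ) = (i : ℕ) + 1 ∨ (i : ℕ) = (j : ℕ) + 1
  | Sum.inl i, Sum.inr _ => i = i₀
  | Sum.inr _, _ => False

/-- Target of each vertex in the chosen repair. -/
def repTarget (m : ℕ) (i₀ : Fin (m + 1)) (i : Fin (m + 1)) : Fin (m + 1) ⊕ Unit :=
  if h : (i : ℕ) < (i₀ : ℕ) then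
    Sum.inl ⟨(i : ℕ) + 1, by omega⟩
  else if (i : ℕ) = (i₀ : ℕ) then
    Sum.inr ()
  else
    Sum.inl ⟨(i : ℕ) - 1, by omega⟩

def repD (m : ℕ) (i₀ : Fin (m + 1)) :
    (Fin (m + 1) ⊕ Unit) → (Fin (m + 1) ⊕ Unit) → Prop
  | Sum.inl i, b => b = repTarget m i₀ i
  | Sum.inr _, _ => False

theorem stmt17 (m : ℕ) (hm : 2 ≤ m) (i₀ : Fin (m + 1))
    (h0 : 0 < (i₀ : ℕ)) (hi : (i₀ : ℕ) < m) :
    ∃ D : (Fin (m + 1) ⊕ Unit) → (Fin (m + 1) ⊕ Unit) → Prop,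
      Repair (doubledPathPlus m i₀) D ∧
      ¬ ∃ a b : Fin (m + 1) ⊕ Unit, a ≠ b ∧ D a b ∧ D b a := by
  refine ⟨repD m i₀, ⟨?_, ?_, ?_⟩, ?_⟩
  · -- subset of R
    rintro (i | u) b hab
    · simp only [repD] at hab
      subst hab
      unfold repTarget
      split_ifs with h1 h2
      · exact Or.inl rfl
      · show i = i₀
        exact Fin.ext h2
      · exact Or.inr (by simp; omega)
    · exact hab.elim
  · -- consistent
    rintro (i | u) b b' hb hb'
    · simp only [repD] at hb hb'; rw [hb, hb']
    · exact hb.elim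
  · -- maximal
    intro D' hcons hsub hsubR
    funext a b
    apply propext
    constructor
    · intro hab
      cases a with
      | inl i =>
        have hD : repD m i₀ (Sum.inl i) (repTarget m i₀ i) := rfl
        have := hcons (Sum.inl i) b (repTarget m i₀ i) hab (hsub _ _ hD)
        simpa [repD] using this
      | inr u => exact (hsubR _ _ hab).elim
    · exact hsub a b
  · -- no 2-cycle
    rintro ⟨a, b, hne, hab, hba⟩
    cases a with
    | inr u => exact hab.elim
    | inl i =>
      cases b with
      | inr u => exact hba.elim
      | inl j =>
        simp only [repD, repTarget] at hab hba
        have hij : (i : ℕ) ≠ (j : ℕ) := fun h => hne (by simp [Fin.ext_iff, h])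
        split_ifs at hab hba <;>
          simp only [Sum.inl.injEq, Fin.ext_iff, Fin.val_mk,
            reduceCtorEq] at hab hba <;> omega
end

section
/- Let m ≥ 1 and let R be the relation on the finite vertex set {a, b_1, …, b_{m+1}, c_1, …, c_m, a'} (all distinct) whose edges are: R(a, b_1), R(b_1, c_1), R(c_1, a); for each 2 ≤ i ≤ m: R(c_{i-1}, b_i), R(b_i, c_i), R(c_i, c_{i-1}); and R(c_m, b_{m+1}), R(b_{m+1}, a'), R(a', c_m) (a chain of consecutive triangles). Then every repair D of R contains a closed walk of length 3. -/
theorem stmt18 {V : Type*} [Fintype V] (m : ℕ) (hm : 1 ≤ m)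
    (a a' : V) (b c : ℕ → V)
    -- all the named vertices are pairwise distinct:
    (haa' : a ≠ a')
    (hba : ∀ i, 1 ≤ i → i ≤ m + 1 → b i ≠ a ∧ b i ≠ a')
    (hca : ∀ i, 1 ≤ i → i ≤ m → c i ≠ a ∧ c i ≠ a')
    (hbinj : ∀ i j, 1 ≤ i → i ≤ m + 1 → 1 ≤ j → j ≤ m + 1 → b i = b j → i = j)
    (hcinj : ∀ i j, 1 ≤ i → i ≤ m → 1 ≤ j → j ≤ m → c i = c j → i = j)
    (hbc : ∀ i j, 1 ≤ i → i ≤ m + 1 → 1 ≤ j → j ≤ m → b i ≠ c j)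
    (R : V → V → Prop)
    -- R is the chain of consecutive triangles:
    (hR : ∀ u v, R u v ↔
      ((u = a ∧ v = b 1) ∨ (u = b 1 ∧ v = c 1) ∨ (u = c 1 ∧ v = a) ∨
        (∃ i, 2 ≤ i ∧ i ≤ m ∧
          ((u = c (i - 1) ∧ v = b i) ∨ (u = b i ∧ v = c i) ∨
            (u = c i ∧ v = c (i - 1)))) ∨
        (u = c m ∧ v = b (m + 1)) ∨ (u = b (m + 1) ∧ v = a') ∨ (u = a' ∧ v = c m))) :
    ∀ D : V → V → Prop, Repair R D → ∃ u v w : V, D u v ∧ D v w ∧ D w u := by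
  intro D hD
  obtain ⟨hsub, hcons, hmax⟩ := hD
  classical
  -- every vertex with an outgoing R-edge has an outgoing D-edge
  have htot : ∀ u v, R u v → ∃ w, D u w ∧ R u w := by
    intro u v huv
    by_cases h : ∃ w, D u w
    · obtain ⟨w, hw⟩ := h
      exact ⟨w, hw, hsub _ _ hw⟩
    · push_neg at h
      exfalso
      have hmax' := hmax (fun x y => D x y ∨ (x = u ∧ y = v)) ?_ ?_ ?_
      · have : D u v := by
          rw [← hmax']
          exact Or.inr ⟨rfl, rfl⟩
        exact h v this
      · intro p q q' hq hq'
        rcases hq with hq | ⟨rfl, rfl⟩ <;> rcases hq' with hq' | ⟨h1, h2⟩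
        · exact hcons _ _ _ hq hq'
        · exact absurd (h1 ▸ hq) (h q)
        · exact absurd hq' (h q')
        · exact h2.symm
      · intro p q hq; exact Or.inl hq
      · intro p q hq
        rcases hq with hq | ⟨rfl, rfl⟩
        · exact hsub _ _ hq
        · exact huv
  -- out-neighborhoods
  have outA : ∀ v, R a v → v = b 1 := by
    intro v hv
    rw [hR] at hv
    rcases hv with ⟨_, rfl⟩ | ⟨h1, _⟩ | ⟨h1, _⟩ | ⟨i, hi1, hi2, ⟨h1, _⟩ | ⟨h1, _⟩ | ⟨h1, _⟩⟩ |
      ⟨h1, _⟩ | ⟨h1, _⟩ | ⟨h1, _⟩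
    · rfl
    · exact absurd h1.symm (hba 1 le_rfl (by omega)).1
    · exact absurd h1.symm (hca 1 le_rfl hm).1
    · exact absurd h1.symm (hca (i-1) (by omega) (by omega)).1
    · exact absurd h1.symm (hba i (by omega) (by omega)).1
    · exact absurd h1.symm (hca i (by omega) (by omega)).1
    · exact absurd h1.symm (hca m hm le_rfl).1
    · exact absurd h1.symm (hba (m+1) (by omega) (by omega)).1
    · exact absurd h1 haa'
  have outB : ∀ i v, 1 ≤ i → i ≤ m → R (b i) v → v = c i := by
    intro i v hi1 hi2 hv
    rw [hR] at hv
    rcases hv with ⟨h1, _⟩ | ⟨h1, rfl⟩ | ⟨h1, _⟩ | ⟨j, hj1, hj2, ⟨h1, _⟩ | ⟨h1, rfl⟩ | ⟨h1, _⟩⟩ |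
      ⟨h1, _⟩ | ⟨h1, _⟩ | ⟨h1, _⟩
    · exact absurd h1 (hba i hi1 (by omega)).1
    · rw [hbinj i 1 hi1 (by omega) (by omega) (by omega) h1]
    · exact absurd h1 (hbc i 1 hi1 (by omega) le_rfl hm)
    · exact absurd h1 (hbc i (j-1) hi1 (by omega) (by omega) (by omega))
    · rw [hbinj i j hi1 (by omega) (by omega) (by omega) h1]
    · exact absurd h1 (hbc i j hi1 (by omega) (by omega) (by omega))
    · exact absurd h1 (hbc i m hi1 (by omega) hm le_rfl)
    · exact absurd (hbinj i (m+1) hi1 (by omega) (by omega) (by omega) h1) (by omega)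
    · exact absurd h1 (hba i hi1 (by omega)).2
  have outBm1 : ∀ v, R (b (m+1)) v → v = a' := by
    intro v hv
    rw [hR] at hv
    rcases hv with ⟨h1, _⟩ | ⟨h1, _⟩ | ⟨h1, _⟩ | ⟨j, hj1, hj2, ⟨h1, _⟩ | ⟨h1, _⟩ | ⟨h1, _⟩⟩ |
      ⟨h1, _⟩ | ⟨_, rfl⟩ | ⟨h1, _⟩
    · exact absurd h1 (hba (m+1) (by omega) (by omega)).1
    · exact absurd (hbinj (m+1) 1 (by omega) (by omega) (by omega) (by omega) h1) (by omega)
    · exact absurd h1 (hbc (m+1) 1 (by omega) (by omega) le_rfl hm)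
    · exact absurd h1 (hbc (m+1) (j-1) (by omega) (by omega) (by omega) (by omega))
    · exact absurd (hbinj (m+1) j (by omega) (by omega) (by omega) (by omega) h1) (by omega)
    · exact absurd h1 (hbc (m+1) j (by omega) (by omega) (by omega) (by omega))
    · exact absurd h1 (hbc (m+1) m (by omega) (by omega) hm le_rfl)
    · rfl
    · exact absurd h1 (hba (m+1) (by omega) (by omega)).2
  have outA' : ∀ v, R a' v → v = c m := by
    intro v hv
    rw [hR] at hv
    rcases hv with ⟨h1, _⟩ | ⟨h1, _⟩ | ⟨h1, _⟩ | ⟨j, hj1, hj2, ⟨h1, _⟩ | ⟨h1, _⟩ | ⟨h1, _⟩⟩ |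
      ⟨h1, _⟩ | ⟨h1, _⟩ | ⟨_, rfl⟩
    · exact absurd h1.symm haa'
    · exact absurd h1.symm (hba 1 le_rfl (by omega)).2
    · exact absurd h1.symm (hca 1 le_rfl hm).2
    · exact absurd h1.symm (hca (j-1) (by omega) (by omega)).2
    · exact absurd h1.symm (hba j (by omega) (by omega)).2
    · exact absurd h1.symm (hca j (by omega) (by omega)).2
    · exact absurd h1.symm (hca m hm le_rfl).2
    · exact absurd h1.symm (hba (m+1) (by omega) (by omega)).2
    · rfl
  have outC : ∀ i v, 1 ≤ i → i ≤ m → R (c i) v →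
      v = b (i+1) ∨ (i = 1 ∧ v = a) ∨ (2 ≤ i ∧ v = c (i-1)) := by
    intro i v hi1 hi2 hv
    rw [hR] at hv
    rcases hv with ⟨h1, _⟩ | ⟨h1, _⟩ | ⟨h1, rfl⟩ | ⟨j, hj1, hj2, ⟨h1, rfl⟩ | ⟨h1, _⟩ | ⟨h1, rfl⟩⟩ |
      ⟨h1, rfl⟩ | ⟨h1, _⟩ | ⟨h1, _⟩
    · exact absurd h1 (hca i hi1 hi2).1
    · exact absurd h1.symm (hbc 1 i le_rfl (by omega) hi1 hi2)
    · refine Or.inr (Or.inl ⟨hcinj i 1 hi1 hi2 le_rfl hm h1, rfl⟩)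
    · have : i = j - 1 := hcinj i (j-1) hi1 hi2 (by omega) (by omega) h1
      exact Or.inl (by rw [this]; congr 1; omega)
    · exact absurd h1.symm (hbc j i (by omega) (by omega) hi1 hi2)
    · have : i = j := hcinj i j hi1 hi2 (by omega) hj2 h1
      subst this
      exact Or.inr (Or.inr ⟨hj1, rfl⟩)
    · have : i = m := hcinj i m hi1 hi2 hm le_rfl h1
      exact Or.inl (by rw [this])
    · exact absurd h1.symm (hbc (m+1) i (by omega) (by omega) hi1 hi2)
    · exact absurd h1 (hca i hi1 hi2).2
  -- specific D edges
  have hDa : D a (b 1) := by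
    obtain ⟨w, hw, hRw⟩ := htot a (b 1) ((hR a (b 1)).2 (Or.inl ⟨rfl, rfl⟩))
    exact (outA w hRw) ▸ hw
  have hDb : ∀ i, 1 ≤ i → i ≤ m → D (b i) (c i) := by
    intro i hi1 hi2
    have hRe : R (b i) (c i) := by
      rw [hR]
      rcases Nat.eq_or_lt_of_le hi1 with h | h
      · exact Or.inr (Or.inl ⟨by rw [← h], by rw [← h]⟩)
      · exact Or.inr (Or.inr (Or.inr (Or.inl ⟨i, by omega, hi2,
          Or.inr (Or.inl ⟨rfl, rfl⟩)⟩)))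
    obtain ⟨w, hw, hRw⟩ := htot _ _ hRe
    exact (outB i w hi1 hi2 hRw) ▸ hw
  have hDbm1 : D (b (m+1)) a' := by
    obtain ⟨w, hw, hRw⟩ := htot (b (m+1)) a'
      ((hR _ _).2 (Or.inr (Or.inr (Or.inr (Or.inr (Or.inr (Or.inl ⟨rfl, rfl⟩)))))))
    exact (outBm1 w hRw) ▸ hw
  have hDa' : D a' (c m) := by
    obtain ⟨w, hw, hRw⟩ := htot a' (c m)
      ((hR _ _).2 (Or.inr (Or.inr (Or.inr (Or.inr (Or.inr (Or.inr ⟨rfl, rfl⟩))))))) 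
    exact (outA' w hRw) ▸ hw
  have hDc : ∀ i, 1 ≤ i → i ≤ m →
      D (c i) (b (i+1)) ∨ (i = 1 ∧ D (c 1) a) ∨ (2 ≤ i ∧ D (c i) (c (i-1))) := by
    intro i hi1 hi2
    have hRe : R (c i) (b (i+1)) := by
      rw [hR]
      rcases Nat.eq_or_lt_of_le hi2 with h | h
      · exact Or.inr (Or.inr (Or.inr (Or.inr (Or.inl ⟨by rw [h], by rw [h]⟩))))
      · refine Or.inr (Or.inr (Or.inr (Or.inl ⟨i+1, by omega, by omega,
          Or.inl ⟨rfl, rfl⟩⟩)))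
    obtain ⟨w, hw, hRw⟩ := htot _ _ hRe
    rcases outC i w hi1 hi2 hRw with rfl | ⟨h1, rfl⟩ | ⟨h1, rfl⟩
    · exact Or.inl hw
    · exact Or.inr (Or.inl ⟨h1, h1 ▸ hw⟩)
    · exact Or.inr (Or.inr ⟨h1, hw⟩)
  -- main induction
  have aux : ∀ k i, 1 ≤ i → i + k = m → D (c i) (b (i+1)) →
      ∃ u v w : V, D u v ∧ D v w ∧ D w u := by
    intro k
    induction k with
    | zero =>
      intro i hi1 him hfwd
      have : i = m := by omega
      subst this
      exact ⟨c i, b (i+1), a', hfwd, hDbm1, hDa'⟩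
    | succ k ih =>
      intro i hi1 him hfwd
      rcases hDc (i+1) (by omega) (by omega) with h | ⟨h1, _⟩ | ⟨_, h2⟩
      · exact ih (i+1) (by omega) (by omega) h
      · omega
      · have h2' : D (c (i+1)) (c i) := by
          have : i + 1 - 1 = i := by omega
          rwa [this] at h2
        exact ⟨c i, b (i+1), c (i+1), hfwd, hDb (i+1) (by omega) (by omega), h2'⟩
  rcases hDc 1 le_rfl hm with h | ⟨_, h2⟩ | ⟨h1, _⟩
  · exact aux (m-1) 1 le_rfl (by omega) h
  · exact ⟨a, b 1, c 1, hDa, hDb 1 le_rfl hm, h2⟩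
  · omega
end
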